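/- arXiv:1301.5147 — 3 statements merged into one kernel-verified Lean document; each statement's English description precedes it below -/
import Mathlib

section
/- Let A = [[−14, 9], [−25, 16]], B = [[1, 1], [0, 1]], A' = [[−39, 25], [−64, 41]], B' = [[1, 0], [−1, 1]]. There is no 2×2 integer matrix K with det K = 1 such that K⁻¹·(A⁻¹·B·A)·K = A' and K⁻¹·A·K = B'. -/
/-!
Conjugation by `K` turns the two relations into the linear equations `A K = K B'` and
`(A⁻¹ B A) K = K A'`. Their integer solutions are exactly the multiples `t • K₁` of
`K₁ = !![8, -15; 15, -25]`, and `det (t • K₁) = 25 t²` is never `1`. Over `ℚ` the matrix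
`K₁ / 5` does satisfy all three conditions: the obstruction is integrality.
-/

open Matrix

theorem Matrix.mul_eq_mul_of_inv_mul_mul_eq {n α : Type*} [Fintype n] [DecidableEq n] [CommRing α]
    {K X Y : Matrix n n α} (hK : IsUnit K.det) (h : K⁻¹ * X * K = Y) : X * K = K * Y := by
  rw [← h, Matrix.mul_assoc, mul_nonsing_inv_cancel_left _ _ hK]

lemma twist_conj_eq :
    (!![-14, 9; -25, 16] : Matrix (Fin 2) (Fin 2) ℤ)⁻¹ * !![1, 1; 0, 1] * !![-14, 9; -25, 16] =
      !![-399, 256; -625, 401] := by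
  rw [inv_def, det_fin_two_of, adjugate_fin_two_of]
  norm_num [mul_fin_two]

lemma eq_smul_of_intertwines {K : Matrix (Fin 2) (Fin 2) ℤ}
    (h₁ : !![-14, 9; -25, 16] * K = K * !![1, 0; -1, 1])
    (h₂ : !![-399, 256; -625, 401] * K = K * !![-39, 25; -64, 41]) :
    K = (2 * K 0 0 - K 1 0) • !![8, -15; 15, -25] := by
  rw [eta_fin_two K] at h₁ h₂ ⊢
  simp only [mul_fin_two, smul_of, smul_cons, smul_empty, smul_eq_mul, of_apply, cons_val',
    cons_val_zero, cons_val_one, cons_val_fin_one, EmbeddingLike.apply_eq_iff_eq, vecCons_inj,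
    and_true] at h₁ h₂ ⊢
  omega

lemma det_smul_intertwiner (t : ℤ) :
    (t • !![8, -15; 15, -25] : Matrix (Fin 2) (Fin 2) ℤ).det = 25 * t ^ 2 := by
  rw [det_smul, det_fin_two_of]
  norm_num [mul_comm]

theorem stmt_8 :
    let A : Matrix (Fin 2) (Fin 2) ℤ := !![-14, 9; -25, 16]
    let B : Matrix (Fin 2) (Fin 2) ℤ := !![1, 1; 0, 1]
    let A' : Matrix (Fin 2) (Fin 2) ℤ := !![-39, 25; -64, 41]
    let B' : Matrix (Fin 2) (Fin 2) ℤ := !![1, 0; -1, 1]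
    ¬ ∃ K : Matrix (Fin 2) (Fin 2) ℤ,
        K.det = 1 ∧ K⁻¹ * (A⁻¹ * B * A) * K = A' ∧ K⁻¹ * A * K = B' := by
  rintro A B A' B' ⟨K, hdet, hconjC, hconjA⟩
  have hK : IsUnit K.det := hdet ▸ isUnit_one
  rw [twist_conj_eq] at hconjC
  have hK_eq := eq_smul_of_intertwines (mul_eq_mul_of_inv_mul_mul_eq hK hconjA)
    (mul_eq_mul_of_inv_mul_mul_eq hK hconjC)
  rw [hK_eq, det_smul_intertwiner] at hdet
  omega
end

section
/- Let α, β, γ, δ be integers such that M(γ,δ) · M(α,β) = F. Then both (α,β) and (γ,δ) satisfy the Diophantine equation 25x² + 25y² − 55xy = 25; that is, 25α² + 25β² − 55αβ = 25 and 25γ² + 25δ² − 55γδ = 25. -/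
open Matrix

/-- The Dehn twist matrix of a simple closed curve of class `α·a + β·b` on the torus. -/
def DehnTwistMatrix (α β : ℤ) : Matrix (Fin 2) (Fin 2) ℤ :=
  !![1 - α * β, α ^ 2; -β ^ 2, 1 + α * β]

/-- The monodromy matrix `F`. -/
def Fmat : Matrix (Fin 2) (Fin 2) ℤ := !![-39, 25; -25, 16]

/-! A Dehn twist matrix `M` has trace `2` and determinant `1`, so Cayley–Hamilton reads
`M² = 2M - 1`. Hence `M(γ,δ) M(α,β) = F` gives `F M(α,β) = 2F - M(γ,δ)` and
`M(γ,δ) F = 2F - M(α,β)`, and both traces equal `2 tr F - 2 = -48`. Since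
`M(α,β) = 1 + v wᵀ` with `v = (α, β)`, `w = (-β, α)`, the trace `tr (F M(α,β)) = tr F + wᵀ F v`
is `-23` plus a binary quadratic form in `(α, β)`, and equating it to `-48` is the
Diophantine equation. -/

theorem Matrix.mul_self_eq_trace_smul_sub_one_of_det_eq_one {R : Type*} [CommRing R]
    (Y : Matrix (Fin 2) (Fin 2) R) (hY : Y.det = 1) : Y * Y = Y.trace • Y - 1 := by
  rw [det_fin_two] at hY
  ext i j
  fin_cases i <;> fin_cases j <;> simp [mul_apply, Fin.sum_univ_two, trace_fin_two]
  · linear_combination -hY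
  · ring
  · ring
  · linear_combination -hY

theorem DehnTwistMatrix_trace (α β : ℤ) : (DehnTwistMatrix α β).trace = 2 := by
  rw [DehnTwistMatrix, trace_fin_two_of]
  ring

theorem DehnTwistMatrix_det (α β : ℤ) : (DehnTwistMatrix α β).det = 1 := by
  rw [DehnTwistMatrix, det_fin_two_of]
  ring

theorem DehnTwistMatrix_mul_self (α β : ℤ) :
    DehnTwistMatrix α β * DehnTwistMatrix α β = (2 : ℤ) • DehnTwistMatrix α β - 1 := by
  rw [mul_self_eq_trace_smul_sub_one_of_det_eq_one _ (DehnTwistMatrix_det α β),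
    DehnTwistMatrix_trace]

theorem trace_mul_DehnTwistMatrix (A : Matrix (Fin 2) (Fin 2) ℤ) (α β : ℤ) :
    (A * DehnTwistMatrix α β).trace =
      A.trace + A 1 0 * α ^ 2 - A 0 1 * β ^ 2 + (A 1 1 - A 0 0) * α * β := by
  simp only [DehnTwistMatrix, trace_fin_two, mul_apply, Fin.sum_univ_two, of_apply, cons_val',
    cons_val_zero, cons_val_one, cons_val_fin_one]
  ring

theorem trace_Fmat : Fmat.trace = -23 := by
  rw [Fmat, trace_fin_two_of]
  norm_num

theorem trace_Fmat_mul_DehnTwistMatrix (α β : ℤ) :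
    (Fmat * DehnTwistMatrix α β).trace = -23 - 25 * α ^ 2 - 25 * β ^ 2 + 55 * α * β := by
  rw [trace_mul_DehnTwistMatrix, trace_Fmat]
  simp only [Fmat, of_apply, cons_val', cons_val_zero, cons_val_one, cons_val_fin_one]
  ring

theorem stmt_13 (α β γ δ : ℤ)
    (h : DehnTwistMatrix γ δ * DehnTwistMatrix α β = Fmat) :
    25 * α ^ 2 + 25 * β ^ 2 - 55 * α * β = 25 ∧
    25 * γ ^ 2 + 25 * δ ^ 2 - 55 * γ * δ = 25 := by
  have hFα : Fmat * DehnTwistMatrix α β = (2 : ℤ) • Fmat - DehnTwistMatrix γ δ := by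
    rw [← h, mul_assoc, DehnTwistMatrix_mul_self, mul_sub, mul_smul_comm, mul_one]
  have hγF : DehnTwistMatrix γ δ * Fmat = (2 : ℤ) • Fmat - DehnTwistMatrix α β := by
    rw [← h, ← mul_assoc, DehnTwistMatrix_mul_self, sub_mul, smul_mul_assoc, one_mul]
  have hα := congrArg trace hFα
  have hγ := congrArg trace hγF
  rw [trace_Fmat_mul_DehnTwistMatrix] at hα
  rw [trace_mul_comm, trace_Fmat_mul_DehnTwistMatrix] at hγ
  simp only [trace_sub, trace_smul, smul_eq_mul, trace_Fmat, DehnTwistMatrix_trace] at hα hγ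
  constructor <;> linarith
end

section
/- Every ordered pair of Dehn twist matrices whose product is F is Hurwitz equivalent to one of exactly two classes: for all integers α, β, γ, δ with M(γ,δ) · M(α,β) = F, the ordered pair (M(α,β), M(γ,δ)) is Hurwitz equivalent either to (M(3,5), M(1,0)) or to (M(5,8), M(0,1)). -/
open Matrix

/-- Elementary Hurwitz moves and global conjugation on ordered pairs of
2×2 integer matrices of determinant 1. -/
inductive HurwitzMove :
    (Matrix (Fin 2) (Fin 2) ℤ × Matrix (Fin 2) (Fin 2) ℤ) →
    (Matrix (Fin 2) (Fin 2) ℤ × Matrix (Fin 2) (Fin 2) ℤ) → Prop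
  | move1 (A B : Matrix (Fin 2) (Fin 2) ℤ) :
      HurwitzMove (A, B) (A⁻¹ * B * A, A)
  | move2 (A B : Matrix (Fin 2) (Fin 2) ℤ) :
      HurwitzMove (A, B) (B, B * A * B⁻¹)
  | conj (A B K : Matrix (Fin 2) (Fin 2) ℤ) (hK : K.det = 1) :
      HurwitzMove (A, B) (K⁻¹ * A * K, K⁻¹ * B * K)

/-- Hurwitz equivalence: the equivalence relation generated by the elementary
Hurwitz moves together with global conjugation. -/
def HurwitzEquiv :
    (Matrix (Fin 2) (Fin 2) ℤ × Matrix (Fin 2) (Fin 2) ℤ) →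
    (Matrix (Fin 2) (Fin 2) ℤ × Matrix (Fin 2) (Fin 2) ℤ) → Prop :=
  Relation.EqvGen HurwitzMove

/-!
Write `M(u)` for the Dehn twist matrix of `u = (a, b)` and `ω(u, v) = a d - b c` for
`v = (c, d)`; then `M(v) w = w - ω(w, v) v` and `M(u) u = u`. If `M(v) M(u) = F`, the trace gives
`2 - ω(u, v)² = tr F = -23`, so `ω(u, v) = ±5`, and `F u = M(v) u = u - ω(u, v) v` gives
`v = ±P u` with `P = (I - F) / 5 = !![8, -5; 5, -3]`. Hence every such pair is
`(M(u), M(P u))` with `u` on the conic `ω(u, P u) = 5a² - 11ab + 5b² = 5`, and the Hurwitz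
move `(A, B) ↦ (B, B A B⁻¹)` sends it to the pair of `P u`. Descending on `‖u‖²` along the orbit
`P^ℤ u` ends at a `u` with `‖u‖ ≤ ‖P^{±1} u‖`, which on the conic forces `u = ±(1, 0)` or
`u = ±(0, 1)`; finally `P (3, 5) = (-1, 0)` and `P (5, 8) = (0, 1)`.
-/

lemma dehnTwistMatrix_neg (a b : ℤ) : DehnTwistMatrix (-a) (-b) = DehnTwistMatrix a b := by
  simp [DehnTwistMatrix]

lemma inv_dehnTwistMatrix (a b : ℤ) :
    (DehnTwistMatrix a b)⁻¹ = !![1 + a * b, -a ^ 2; b ^ 2, 1 - a * b] := by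
  refine inv_eq_right_inv ?_
  simp only [DehnTwistMatrix, mul_fin_two, one_fin_two]
  congr 1; ring_nf

lemma dehnTwistMatrix_mulVec (a b c d : ℤ) :
    DehnTwistMatrix c d *ᵥ ![a, b] = ![a - (a * d - b * c) * c, b - (a * d - b * c) * d] := by
  ext i; fin_cases i <;> simp [DehnTwistMatrix, mulVec] <;> ring

lemma dehnTwistMatrix_mulVec_self (a b : ℤ) : DehnTwistMatrix a b *ᵥ ![a, b] = ![a, b] := by
  rw [dehnTwistMatrix_mulVec, mul_comm a b, sub_self]
  simp

lemma trace_dehnTwistMatrix_mul (a b c d : ℤ) :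
    (DehnTwistMatrix c d * DehnTwistMatrix a b).trace = 2 - (a * d - b * c) ^ 2 := by
  rw [DehnTwistMatrix, DehnTwistMatrix, mul_fin_two, trace_fin_two_of]
  ring

lemma dehnTwistMatrix_mul_mul_inv (a b c d : ℤ) :
    DehnTwistMatrix c d * DehnTwistMatrix a b * (DehnTwistMatrix c d)⁻¹ =
      DehnTwistMatrix (a - (a * d - b * c) * c) (b - (a * d - b * c) * d) := by
  rw [inv_dehnTwistMatrix]
  simp only [DehnTwistMatrix, mul_fin_two]
  congr 1; ring_nf

lemma hurwitzMove_dehnTwistMatrix (a b c d : ℤ) :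
    HurwitzMove (DehnTwistMatrix a b, DehnTwistMatrix c d)
      (DehnTwistMatrix c d,
        DehnTwistMatrix (a - (a * d - b * c) * c) (b - (a * d - b * c) * d)) :=
  dehnTwistMatrix_mul_mul_inv a b c d ▸ HurwitzMove.move2 _ _

def twistPair (a b : ℤ) : Matrix (Fin 2) (Fin 2) ℤ × Matrix (Fin 2) (Fin 2) ℤ :=
  (DehnTwistMatrix a b, DehnTwistMatrix (8 * a - 5 * b) (5 * a - 3 * b))

lemma twistPair_neg (a b : ℤ) : twistPair (-a) (-b) = twistPair a b := by
  rw [twistPair, twistPair, ← dehnTwistMatrix_neg a, ← dehnTwistMatrix_neg (8 * a - 5 * b)]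
  congr 2 <;> ring

lemma eq_twistPair_of_mul_eq_Fmat {a b c d : ℤ}
    (h : DehnTwistMatrix c d * DehnTwistMatrix a b = Fmat) :
    5 * a ^ 2 - 11 * a * b + 5 * b ^ 2 = 5 ∧
      (DehnTwistMatrix a b, DehnTwistMatrix c d) = twistPair a b := by
  have hω : (a * d - b * c) ^ 2 = 25 := by
    have htr := trace_dehnTwistMatrix_mul a b c d
    rw [h, Fmat, trace_fin_two_of] at htr
    linarith
  have hFu : ![-39 * a + 25 * b, -25 * a + 16 * b] =
      ![a - (a * d - b * c) * c, b - (a * d - b * c) * d] := by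
    rw [← dehnTwistMatrix_mulVec, ← dehnTwistMatrix_mulVec_self a b, mulVec_mulVec, h]
    ext i; fin_cases i <;> simp [Fmat, mulVec]
  simp only [vecCons_inj, and_true] at hFu
  generalize hω_def : a * d - b * c = ω at hω hFu
  have hω5 : ω = 5 ∨ ω = -5 := by
    have : (ω - 5) * (ω + 5) = 0 := by linear_combination hω
    rcases mul_eq_zero.mp this with h5 | h5
    exacts [.inl (by linarith), .inr (by linarith)]
  rcases hω5 with rfl | rfl
  · obtain ⟨rfl, rfl⟩ : c = 8 * a - 5 * b ∧ d = 5 * a - 3 * b := by omega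
    exact ⟨by linear_combination hω_def, rfl⟩
  · obtain ⟨rfl, rfl⟩ : c = -(8 * a - 5 * b) ∧ d = -(5 * a - 3 * b) := by omega
    exact ⟨by linear_combination -hω_def, by rw [dehnTwistMatrix_neg]; rfl⟩

lemma hurwitzMove_twistPair {a b c d : ℤ} (hQ : 5 * a ^ 2 - 11 * a * b + 5 * b ^ 2 = 5)
    (hc : c = 8 * a - 5 * b) (hd : d = 5 * a - 3 * b) :
    HurwitzMove (twistPair a b) (twistPair c d) := by
  subst hc hd
  have hmove := hurwitzMove_dehnTwistMatrix a b (8 * a - 5 * b) (5 * a - 3 * b)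
  rwa [show a * (5 * a - 3 * b) - b * (8 * a - 5 * b) = 5 by linear_combination hQ,
    show a - 5 * (8 * a - 5 * b) = -(8 * (8 * a - 5 * b) - 5 * (5 * a - 3 * b)) by ring,
    show b - 5 * (5 * a - 3 * b) = -(5 * (8 * a - 5 * b) - 3 * (5 * a - 3 * b)) by ring,
    dehnTwistMatrix_neg] at hmove

lemma twistPair_eq_of_minimal {a b : ℤ} (hQ : 5 * a ^ 2 - 11 * a * b + 5 * b ^ 2 = 5)
    (hP : a ^ 2 + b ^ 2 ≤ (8 * a - 5 * b) ^ 2 + (5 * a - 3 * b) ^ 2)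
    (hP' : a ^ 2 + b ^ 2 ≤ (5 * b - 3 * a) ^ 2 + (8 * b - 5 * a) ^ 2) :
    twistPair a b = twistPair 1 0 ∨ twistPair a b = twistPair 0 1 := by
  have hab : a ^ 2 + b ^ 2 ≤ 8 := by nlinarith [mul_nonneg (sub_nonneg.2 hP) (sub_nonneg.2 hP')]
  have ha : a ≤ 2 := by nlinarith
  have ha' : -2 ≤ a := by nlinarith
  have hb : b ≤ 2 := by nlinarith
  have hb' : -2 ≤ b := by nlinarith
  interval_cases a <;> interval_cases b <;> simp_all [← twistPair_neg 1 0, ← twistPair_neg 0 1]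

theorem hurwitzEquiv_twistPair {a b : ℤ} (hQ : 5 * a ^ 2 - 11 * a * b + 5 * b ^ 2 = 5) :
    HurwitzEquiv (twistPair a b) (twistPair 1 0) ∨
      HurwitzEquiv (twistPair a b) (twistPair 0 1) := by
  by_cases hP : (8 * a - 5 * b) ^ 2 + (5 * a - 3 * b) ^ 2 < a ^ 2 + b ^ 2
  · have hmove : HurwitzEquiv (twistPair a b) (twistPair (8 * a - 5 * b) (5 * a - 3 * b)) :=
      .rel _ _ (hurwitzMove_twistPair hQ rfl rfl)
    exact (hurwitzEquiv_twistPair (a := 8 * a - 5 * b) (b := 5 * a - 3 * b)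
      (by linear_combination hQ)).imp (.trans _ _ _ hmove) (.trans _ _ _ hmove)
  by_cases hP' : (5 * b - 3 * a) ^ 2 + (8 * b - 5 * a) ^ 2 < a ^ 2 + b ^ 2
  · have hmove : HurwitzEquiv (twistPair a b) (twistPair (5 * b - 3 * a) (8 * b - 5 * a)) :=
      .symm _ _ (.rel _ _ (hurwitzMove_twistPair (by linear_combination hQ) (by ring) (by ring)))
    exact (hurwitzEquiv_twistPair (a := 5 * b - 3 * a) (b := 8 * b - 5 * a)
      (by linear_combination hQ)).imp (.trans _ _ _ hmove) (.trans _ _ _ hmove)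
  rcases twistPair_eq_of_minimal hQ (not_lt.mp hP) (not_lt.mp hP') with h | h <;> rw [h]
  exacts [.inl (.refl _), .inr (.refl _)]
termination_by (a ^ 2 + b ^ 2).toNat
decreasing_by
  all_goals
    have := sq_nonneg (8 * a - 5 * b); have := sq_nonneg (5 * a - 3 * b)
    have := sq_nonneg (5 * b - 3 * a); have := sq_nonneg (8 * b - 5 * a)
    omega

theorem stmt_15 (α β γ δ : ℤ)
    (h : DehnTwistMatrix γ δ * DehnTwistMatrix α β = Fmat) :
    HurwitzEquiv (DehnTwistMatrix α β, DehnTwistMatrix γ δ)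
        (DehnTwistMatrix 3 5, DehnTwistMatrix 1 0) ∨
    HurwitzEquiv (DehnTwistMatrix α β, DehnTwistMatrix γ δ)
        (DehnTwistMatrix 5 8, DehnTwistMatrix 0 1) := by
  obtain ⟨hQ, hpair⟩ := eq_twistPair_of_mul_eq_Fmat h
  have h35 : twistPair 3 5 = (DehnTwistMatrix 3 5, DehnTwistMatrix 1 0) := by
    rw [twistPair, ← dehnTwistMatrix_neg 1 0]; norm_num
  have h58 : twistPair 5 8 = (DehnTwistMatrix 5 8, DehnTwistMatrix 0 1) := by
    norm_num [twistPair]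
  have hmove35 : HurwitzEquiv (twistPair 1 0) (twistPair 3 5) :=
    .symm _ _ (.rel _ _ (twistPair_neg 1 0 ▸ hurwitzMove_twistPair (by norm_num) rfl rfl))
  have hmove58 : HurwitzEquiv (twistPair 0 1) (twistPair 5 8) :=
    .symm _ _ (.rel _ _ (hurwitzMove_twistPair (by norm_num) rfl rfl))
  rw [hpair, ← h35, ← h58]
  exact (hurwitzEquiv_twistPair hQ).imp
    (.trans _ _ _ · hmove35) (.trans _ _ _ · hmove58)
end
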